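/- Let $a, b > 0$, $x \in (0,1]$, $\xi = -\ln x$, and let $N \geq 1$ be an integer. Define $R_N(a,b,x) = \frac{1}{\Gamma(b)} \int_{\xi}^{+\infty} t^{b-1} e^{-a t} r_N(t)\, dt$, where $r_N(t) = f(t) - \sum_{n=0}^{N-1} d_n (t-\xi)^n$ is the Taylor remainder at $\xi$ of $f(t) = \left(\frac{1-e^{-t}}{t}\right)^{b-1}$. Then there exists a constant $C_N(b) > 0$, depending only on $N$ and $b$ (not on $a$ or $x$), such that $|R_N(a,b,x)| \leq C_N(b)\, F_N$, where $F_N = \frac{1}{\Gamma(b)} \int_{\xi}^{+\infty} t^{b-1} e^{-a t} (t-\xi)^N\, dt$. -/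

import Mathlib

/-!
Write `f = g ^ (b - 1)` with `g t = (1 - e⁻ᵗ) / t`, which is analytic and positive on `ℝ`.
Logarithmic differentiation gives `f' = f · t⁻¹ · (b - 1) (t / (eᵗ - 1) - 1)` for `t ≠ 0`,
and since the algebra generated by `t⁻¹` and `t / (eᵗ - 1)` is closed under differentiation
away from `0`, `f⁽ᴺ⁾ = f · t⁻¹ · u` for `N ≥ 1` with `u` in that algebra. Its elements are
bounded on `[1, ∞)` and `f t ≤ 2t` there, so `f⁽ᴺ⁾` is bounded on `[0, ∞)`, say by `M`.
The Lagrange form of Taylor's theorem then gives `|r_N(t)| ≤ M / (N - 1)! · (t - ξ)ᴺ` for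
`t ≥ ξ ≥ 0`, uniformly in `ξ`, and integrating against the positive weight `t^(b-1) e^(-at)`
gives `C_N(b) = M / (N - 1)!`.
-/

open Real MeasureTheory Set Asymptotics Filter
open scoped Nat Topology

/-- `(1 - e⁻ᵗ) / t`, extended by its limit `1` at `t = 0`. -/
noncomputable def oneSubExpNegDiv : ℝ → ℝ := dslope (fun t => 1 - exp (-t)) 0

lemma oneSubExpNegDiv_zero : oneSubExpNegDiv 0 = 1 := by
  have h : HasDerivAt (fun t : ℝ => 1 - exp (-t)) (exp (-0)) 0 :=
    by simpa using ((hasDerivAt_neg (0 : ℝ)).exp).const_sub 1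
  simp [oneSubExpNegDiv, dslope_same, h.deriv]

lemma oneSubExpNegDiv_of_ne_zero {t : ℝ} (ht : t ≠ 0) :
    oneSubExpNegDiv t = (1 - exp (-t)) / t := by
  simp [oneSubExpNegDiv, dslope_of_ne _ ht, slope, div_eq_inv_mul]

lemma oneSubExpNegDiv_pos (t : ℝ) : 0 < oneSubExpNegDiv t := by
  rcases lt_trichotomy t 0 with ht | rfl | ht
  · rw [oneSubExpNegDiv_of_ne_zero ht.ne]
    exact div_pos_of_neg_of_neg (by simp [ht]) ht
  · simp [oneSubExpNegDiv_zero]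
  · rw [oneSubExpNegDiv_of_ne_zero ht.ne']
    exact div_pos (by simp [ht]) ht

lemma analyticAt_oneSubExpNegDiv (t : ℝ) : AnalyticAt ℝ oneSubExpNegDiv t := by
  have h : ∀ s, AnalyticAt ℝ (fun t : ℝ => 1 - exp (-t)) s := by fun_prop
  rcases eq_or_ne t 0 with rfl | ht
  · obtain ⟨p, hp⟩ := h 0
    exact hp.has_fpower_series_dslope_fslope.analyticAt
  · refine ((h t).div analyticAt_id ht).congr ?_
    filter_upwards [eventually_ne_nhds ht] with s hs
    exact (oneSubExpNegDiv_of_ne_zero hs).symm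

lemma contDiff_oneSubExpNegDiv {n : WithTop ℕ∞} : ContDiff ℝ n oneSubExpNegDiv :=
  contDiff_iff_contDiffAt.mpr fun t => (analyticAt_oneSubExpNegDiv t).contDiffAt

noncomputable def divExpSubOne (t : ℝ) : ℝ := t / (exp t - 1)

lemma hasDerivAt_divExpSubOne {t : ℝ} (ht : t ≠ 0) :
    HasDerivAt divExpSubOne
      (t⁻¹ * divExpSubOne t - t⁻¹ * divExpSubOne t ^ 2 - divExpSubOne t) t := by
  have he : exp t - 1 ≠ 0 := sub_ne_zero.mpr (by simpa using ht)
  refine ((hasDerivAt_id t).div ((hasDerivAt_exp t).sub_const 1) he).congr_deriv ?_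
  simp only [divExpSubOne, id]
  field_simp
  ring

lemma divExpSubOne_mem_Icc {t : ℝ} (ht : 0 ≤ t) : divExpSubOne t ∈ Icc 0 1 := by
  rcases ht.eq_or_lt with rfl | ht
  · simp [divExpSubOne]
  have h := add_one_le_exp t
  exact ⟨div_nonneg ht.le (by linarith), (div_le_one (by linarith)).mpr (by linarith)⟩

noncomputable def invExpAlgebra : Subalgebra ℝ (ℝ → ℝ) :=
  Algebra.adjoin ℝ {fun t => t⁻¹, divExpSubOne}

lemma inv_mem_invExpAlgebra : (fun t : ℝ => t⁻¹) ∈ invExpAlgebra :=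
  Algebra.subset_adjoin (by simp)

lemma divExpSubOne_mem_invExpAlgebra : divExpSubOne ∈ invExpAlgebra :=
  Algebra.subset_adjoin (by simp)

lemma exists_hasDerivAt_of_mem_invExpAlgebra {u : ℝ → ℝ} (hu : u ∈ invExpAlgebra) :
    ∃ u' ∈ invExpAlgebra, ∀ t ≠ 0, HasDerivAt u (u' t) t := by
  induction hu using Algebra.adjoin_induction with
  | mem u hu =>
    have hinv := inv_mem_invExpAlgebra
    have hφ := divExpSubOne_mem_invExpAlgebra
    rcases hu with rfl | rfl
    · refine ⟨-((fun t => t⁻¹) * fun t => t⁻¹), neg_mem (mul_mem hinv hinv), fun t ht => ?_⟩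
      simpa [sq] using hasDerivAt_inv ht
    · refine ⟨(fun t => t⁻¹) * divExpSubOne - (fun t => t⁻¹) * divExpSubOne ^ 2 - divExpSubOne,
        sub_mem (sub_mem (mul_mem hinv hφ) (mul_mem hinv (pow_mem hφ 2))) hφ,
        fun t ht => hasDerivAt_divExpSubOne ht⟩
  | algebraMap c => exact ⟨0, zero_mem _, fun t _ => hasDerivAt_const t c⟩
  | add u v _ _ hu hv =>
    obtain ⟨u', hu', hdu⟩ := hu
    obtain ⟨v', hv', hdv⟩ := hv
    exact ⟨u' + v', add_mem hu' hv', fun t ht => (hdu t ht).add (hdv t ht)⟩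
  | mul u v hu₀ hv₀ hu hv =>
    obtain ⟨u', hu', hdu⟩ := hu
    obtain ⟨v', hv', hdv⟩ := hv
    exact ⟨u' * v + u * v', add_mem (mul_mem hu' hv₀) (mul_mem hu₀ hv'),
      fun t ht => (hdu t ht).mul (hdv t ht)⟩

lemma isBigO_one_of_mem_invExpAlgebra {u : ℝ → ℝ} (hu : u ∈ invExpAlgebra) :
    u =O[𝓟 (Ici 1)] fun _ => (1 : ℝ) := by
  induction hu using Algebra.adjoin_induction with
  | mem u hu =>
    rcases hu with rfl | rfl
    · refine IsBigO.of_bound 1 (eventually_principal.mpr fun t (ht : 1 ≤ t) => ?_)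
      simpa [abs_of_pos (zero_lt_one.trans_le ht)] using inv_le_one_of_one_le₀ ht
    · refine IsBigO.of_bound 1 (eventually_principal.mpr fun t (ht : 1 ≤ t) => ?_)
      obtain ⟨h0, h1⟩ := divExpSubOne_mem_Icc (zero_le_one.trans ht)
      simpa [abs_of_nonneg h0] using h1
  | algebraMap c => exact isBigO_const_const c one_ne_zero _
  | add u v _ _ hu hv => exact hu.add hv
  | mul u v _ _ hu hv => simpa using hu.mul hv

lemma exists_iteratedDeriv_eq_mul_inv_mul {F u₀ : ℝ → ℝ} (hu₀ : u₀ ∈ invExpAlgebra)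
    (hF : ∀ t ≠ 0, HasDerivAt F (F t * t⁻¹ * u₀ t) t) {N : ℕ} (hN : 1 ≤ N) :
    ∃ u ∈ invExpAlgebra, ∀ t ≠ 0, iteratedDeriv N F t = F t * t⁻¹ * u t := by
  induction N, hN using Nat.le_induction with
  | base => exact ⟨u₀, hu₀, fun t ht => by rw [iteratedDeriv_one, (hF t ht).deriv]⟩
  | succ n _ ih =>
    obtain ⟨u, hu, hrep⟩ := ih
    obtain ⟨u', hu', hdu⟩ := exists_hasDerivAt_of_mem_invExpAlgebra hu
    refine ⟨(fun t => t⁻¹) * (u₀ * u - u) + u',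
      add_mem (mul_mem inv_mem_invExpAlgebra (sub_mem (mul_mem hu₀ hu) hu)) hu', fun t ht => ?_⟩
    have hev : iteratedDeriv n F =ᶠ[𝓝 t] fun s => F s * s⁻¹ * u s :=
      (eventually_ne_nhds ht).mono hrep
    have hd : HasDerivAt (fun s => F s * s⁻¹ * u s) _ t :=
      ((hF t ht).mul (hasDerivAt_inv ht)).mul (hdu t ht)
    rw [iteratedDeriv_succ, hev.deriv_eq, hd.deriv]
    simp only [Pi.add_apply, Pi.sub_apply, Pi.mul_apply]
    field_simp
    ring

lemma hasDerivAt_oneSubExpNegDiv_rpow (b : ℝ) {t : ℝ} (ht : t ≠ 0) :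
    HasDerivAt (fun s => oneSubExpNegDiv s ^ (b - 1))
      (oneSubExpNegDiv t ^ (b - 1) * t⁻¹ * ((b - 1) * (divExpSubOne t - 1))) t := by
  have hg : HasDerivAt oneSubExpNegDiv
      ((exp (-t) * t - (1 - exp (-t))) / t ^ 2) t := by
    have h := (((hasDerivAt_neg t).exp).const_sub 1).div (hasDerivAt_id t) ht
    refine (h.congr_deriv (by simp)).congr_of_eventuallyEq ?_
    filter_upwards [eventually_ne_nhds ht] with s hs
    exact oneSubExpNegDiv_of_ne_zero hs
  refine (hg.rpow_const (Or.inl (oneSubExpNegDiv_pos t).ne')).congr_deriv ?_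
  have he : exp t - 1 ≠ 0 := sub_ne_zero.mpr (by simpa using ht)
  rw [rpow_sub_one (oneSubExpNegDiv_pos t).ne', oneSubExpNegDiv_of_ne_zero ht, divExpSubOne,
    exp_neg]
  field_simp

lemma oneSubExpNegDiv_rpow_le {b : ℝ} (hb : 0 < b) {t : ℝ} (ht : 1 ≤ t) :
    oneSubExpNegDiv t ^ (b - 1) ≤ 2 * t := by
  have ht0 : 0 < t := zero_lt_one.trans_le ht
  have hg0 := oneSubExpNegDiv_pos t
  rcases le_or_gt 1 b with hb1 | hb1
  · have hg1 : oneSubExpNegDiv t ≤ 1 := by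
      rw [oneSubExpNegDiv_of_ne_zero ht0.ne', div_le_one ht0]
      linarith [exp_pos (-t)]
    linarith [rpow_le_one hg0.le hg1 (by linarith : 0 ≤ b - 1)]
  · have hexp : exp (-t) ≤ 1 / 2 := by
      rw [exp_neg, inv_le_comm₀ (exp_pos t) (by norm_num)]
      linarith [add_one_le_exp t]
    have hg : (2 * t)⁻¹ ≤ oneSubExpNegDiv t := by
      rw [oneSubExpNegDiv_of_ne_zero ht0.ne', le_div_iff₀ ht0, mul_inv, mul_assoc,
        inv_mul_cancel₀ ht0.ne']
      linarith
    calc oneSubExpNegDiv t ^ (b - 1) ≤ ((2 * t)⁻¹) ^ (b - 1) :=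
          rpow_le_rpow_of_nonpos (by positivity) hg (by linarith)
      _ = (2 * t) ^ (1 - b) := by
          rw [inv_rpow (by positivity), ← rpow_neg (by positivity), neg_sub]
      _ ≤ (2 * t) ^ (1 : ℝ) := rpow_le_rpow_of_exponent_le (by linarith) (by linarith)
      _ = 2 * t := rpow_one _

lemma contDiff_oneSubExpNegDiv_rpow (b : ℝ) {n : WithTop ℕ∞} :
    ContDiff ℝ n fun t => oneSubExpNegDiv t ^ (b - 1) :=
  contDiff_oneSubExpNegDiv.rpow_const_of_ne fun t => (oneSubExpNegDiv_pos t).ne'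

lemma isBigO_iteratedDeriv_oneSubExpNegDiv_rpow {b : ℝ} (hb : 0 < b) {N : ℕ} (hN : 1 ≤ N) :
    iteratedDeriv N (fun t => oneSubExpNegDiv t ^ (b - 1)) =O[𝓟 (Ici 0)] fun _ => (1 : ℝ) := by
  set f := fun t => oneSubExpNegDiv t ^ (b - 1)
  have hu₀ : (b - 1) • (divExpSubOne - 1) ∈ invExpAlgebra :=
    Subalgebra.smul_mem _ (sub_mem divExpSubOne_mem_invExpAlgebra (one_mem _)) _
  obtain ⟨u, hu, hrep⟩ := exists_iteratedDeriv_eq_mul_inv_mul hu₀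
    (fun t ht => hasDerivAt_oneSubExpNegDiv_rpow b ht) hN
  have hnear : iteratedDeriv N f =O[𝓟 (Icc 0 1)] fun _ => (1 : ℝ) :=
    ((contDiff_oneSubExpNegDiv_rpow b).continuous_iteratedDeriv N le_rfl).continuousOn
      |>.isBigO_principal isCompact_Icc (by simp)
  have hf_inv : (fun t => f t * t⁻¹) =O[𝓟 (Ici 1)] fun _ => (1 : ℝ) := by
    refine IsBigO.of_bound 2 (eventually_principal.mpr fun t (ht : 1 ≤ t) => ?_)
    have ht0 : 0 < t := zero_lt_one.trans_le ht
    rw [norm_mul, norm_inv, Real.norm_of_nonneg (rpow_nonneg (oneSubExpNegDiv_pos t).le _),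
      Real.norm_of_nonneg ht0.le, norm_one, mul_one, mul_inv_le_iff₀ ht0]
    exact oneSubExpNegDiv_rpow_le hb ht
  have hfar : iteratedDeriv N f =O[𝓟 (Ici 1)] fun _ => (1 : ℝ) := by
    have h : (fun t => f t * t⁻¹ * u t) =O[𝓟 (Ici 1)] fun _ => (1 : ℝ) := by
      simpa using hf_inv.mul (isBigO_one_of_mem_invExpAlgebra hu)
    exact h.congr' (eventually_principal.mpr fun t (ht : 1 ≤ t) =>
      (hrep t (zero_lt_one.trans_le ht).ne').symm) EventuallyEq.rfl
  simpa [sup_principal, Icc_union_Ici_eq_Ici zero_le_one] using hnear.sup hfar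

lemma abs_sub_taylorSum_le {F : ℝ → ℝ} {n : ℕ} {ξ t M : ℝ} (hF : ContDiff ℝ (n + 1) F)
    (hξt : ξ ≤ t) (hM : ∀ y ∈ Icc ξ t, |iteratedDeriv (n + 1) F y| ≤ M) :
    |F t - ∑ k ∈ Finset.range (n + 1), iteratedDeriv k F ξ / k ! * (t - ξ) ^ k| ≤
      M / n ! * (t - ξ) ^ (n + 1) := by
  rcases hξt.eq_or_lt with rfl | hlt
  · simp [Finset.sum_range_succ']
  have hwithin : ∀ k ≤ n + 1,
      EqOn (iteratedDerivWithin k F (Icc ξ t)) (iteratedDeriv k F) (Icc ξ t) :=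
    fun k hk y hy => iteratedDerivWithin_eq_iteratedDeriv (uniqueDiffOn_Icc hlt)
      ((hF.of_le (by exact_mod_cast hk)).contDiffAt) hy
  have h := taylor_mean_remainder_bound hξt hF.contDiffOn (right_mem_Icc.mpr hξt)
    fun y hy => (hwithin (n + 1) le_rfl hy).symm ▸ hM y hy
  rw [taylor_within_apply, Real.norm_eq_abs] at h
  convert h using 3
  · refine Finset.sum_congr rfl fun k hk => ?_
    rw [hwithin k (Finset.mem_range.mp hk).le (left_mem_Icc.mpr hξt), smul_eq_mul]
    ring
  · ring

lemma integrableOn_rpow_mul_exp_neg_mul_mul_sub_pow {a b ξ : ℝ} (ha : 0 < a) (hb : 0 < b)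
    (hξ : 0 ≤ ξ) (N : ℕ) :
    IntegrableOn (fun t => t ^ (b - 1) * exp (-a * t) * (t - ξ) ^ N) (Ioi ξ) := by
  have hN : (0 : ℝ) ≤ N := N.cast_nonneg
  have hdom : IntegrableOn (fun t => t ^ (b - 1 + N) * exp (-a * t)) (Ioi ξ) := by
    refine ((integrableOn_rpow_mul_exp_neg_mul_rpow (s := b - 1 + N) (p := 1) (by linarith)
      zero_lt_one ha).mono_set (Ioi_subset_Ioi hξ)).congr_fun (fun t _ => by simp)
      measurableSet_Ioi
  refine hdom.mono' (by fun_prop)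
    ((ae_restrict_mem measurableSet_Ioi).mono fun t (ht : ξ < t) => ?_)
  have ht0 : 0 < t := hξ.trans_lt ht
  rw [Real.norm_of_nonneg (mul_nonneg (by positivity) (pow_nonneg (sub_nonneg.mpr ht.le) N)),
    rpow_add ht0, rpow_natCast, mul_right_comm _ (t ^ N)]
  exact mul_le_mul_of_nonneg_left (pow_le_pow_left₀ (by linarith) (by linarith) N) (by positivity)

lemma abs_setIntegral_mul_le {α : Type*} [MeasurableSpace α] {μ : Measure α} {s : Set α}
    {w r k : α → ℝ} {K : ℝ} (hs : MeasurableSet s) (hw : ∀ t ∈ s, 0 ≤ w t)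
    (hk : IntegrableOn (fun t => w t * k t) s μ) (hr : ∀ t ∈ s, |r t| ≤ K * k t) :
    |∫ t in s, w t * r t ∂μ| ≤ K * ∫ t in s, w t * k t ∂μ := by
  rw [← integral_const_mul, ← Real.norm_eq_abs]
  refine norm_integral_le_of_norm_le (hk.const_mul K) ((ae_restrict_mem hs).mono fun t ht => ?_)
  rw [norm_mul, Real.norm_of_nonneg (hw t ht), Real.norm_eq_abs, mul_left_comm]
  exact mul_le_mul_of_nonneg_left (hr t ht) (hw t ht)

/-- Remainder estimate: for `b > 0` and `N ≥ 1` there exists `C_N(b) > 0`, independent of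
`a` and `x`, such that `|R_N(a,b,x)| ≤ C_N(b) F_N` for all `a > 0` and `x ∈ (0,1]`. -/
theorem R_N_estimate (b : ℝ) (hb : 0 < b) (N : ℕ) (hN : 1 ≤ N)
    (f : ℝ → ℝ)
    (hf : ∀ t : ℝ, f t = if t = 0 then 1 else ((1 - Real.exp (-t)) / t) ^ (b - 1)) :
    ∃ C : ℝ, 0 < C ∧ ∀ a : ℝ, 0 < a → ∀ x ∈ Set.Ioc (0 : ℝ) 1, ∀ ξ : ℝ, ξ = -Real.log x →
      |(1 / Real.Gamma b) * ∫ t in Set.Ioi ξ, t ^ (b - 1) * Real.exp (-a * t) *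
          (f t - ∑ n ∈ Finset.range N,
            (iteratedDeriv n f ξ / (Nat.factorial n : ℝ)) * (t - ξ) ^ n)|
        ≤ C * ((1 / Real.Gamma b) *
            ∫ t in Set.Ioi ξ, t ^ (b - 1) * Real.exp (-a * t) * (t - ξ) ^ N) := by
  have hf_eq : f = fun t => oneSubExpNegDiv t ^ (b - 1) := by
    funext t
    rcases eq_or_ne t 0 with rfl | ht
    · simp [hf, oneSubExpNegDiv_zero]
    · rw [hf, if_neg ht, oneSubExpNegDiv_of_ne_zero ht]
  obtain ⟨M, hM0, hM⟩ := (isBigO_iteratedDeriv_oneSubExpNegDiv_rpow hb hN).exists_pos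
  rw [← hf_eq, isBigOWith_principal] at hM
  obtain ⟨n, rfl⟩ : ∃ n, N = n + 1 := ⟨N - 1, by omega⟩
  refine ⟨M / n !, by positivity, fun a ha x hx ξ hξ => ?_⟩
  have hξ0 : 0 ≤ ξ := hξ ▸ neg_nonneg.mpr (log_nonpos hx.1.le hx.2)
  have hremainder : ∀ t ∈ Ioi ξ, |f t - ∑ k ∈ Finset.range (n + 1),
      iteratedDeriv k f ξ / k ! * (t - ξ) ^ k| ≤ M / n ! * (t - ξ) ^ (n + 1) :=
    fun t ht => abs_sub_taylorSum_le (hf_eq ▸ contDiff_oneSubExpNegDiv_rpow b) (le_of_lt ht)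
      fun y hy => by simpa using hM y (hξ0.trans hy.1)
  have hΓ : 0 ≤ 1 / Gamma b := by have := Gamma_pos_of_pos hb; positivity
  rw [abs_mul, abs_of_nonneg hΓ, mul_left_comm]
  exact mul_le_mul_of_nonneg_left (abs_setIntegral_mul_le measurableSet_Ioi
    (fun t (ht : ξ < t) => by have := hξ0.trans_lt ht; positivity)
    (integrableOn_rpow_mul_exp_neg_mul_mul_sub_pow ha hb hξ0 _) hremainder) hΓ
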